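/- arXiv:2002.06029 — 6 statements merged into one kernel-verified Lean document; each statement's English description precedes it below -/
import Mathlib

section
/- Let p be a prime and f ≥ 1. For every integer j ≥ 0 there exists a unique integer k such that both intervals [1/(p-1), p/(p-1)) + k and [1/(p-1), p/(p-1)) + k + 1 have nonempty intersection with the open interval (jp/(p-1), (j+1)p/(p-1)). Moreover, writing j - 1 ≡ b (mod p-1) with 0 ≤ b < p-1 (and b = 0 if p = 2), this unique k satisfies k ≡ b + 1 (mod p). -/
/-!
With `q = p - 1`, clearing denominators shows that `[1/q, p/q) + k` and `[1/q, p/q) + k + 1` both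
meet the window `(jp/q, (j+1)p/q)` exactly when `k q ∈ ((j-1)p, jp)`. That open interval has
length `q + 1`, so it contains at most one multiple of `q`; writing `j - 1 - b = q m`, it does
contain `(b + 1 + p m) q = (j - 1) p + (q - b)`.
-/

open Set

theorem Set.Ico_inter_Ioo_nonempty_iff {α : Type*} [LinearOrder α] [DenselyOrdered α]
    {a b c d : α} (hab : a < b) (hcd : c < d) :
    (Ico a b ∩ Ioo c d).Nonempty ↔ a < d ∧ c < b := by
  refine ⟨fun ⟨x, ⟨hax, hxb⟩, hcx, hxd⟩ => ⟨hax.trans_lt hxd, hcx.trans hxb⟩, fun ⟨had, hcb⟩ => ?_⟩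
  have hIoo : (Ioo a b ∩ Ioo c d).Nonempty := by
    rw [Ioo_inter_Ioo, nonempty_Ioo]
    exact max_lt (lt_min hab had) (lt_min hcb hcd)
  exact hIoo.mono (inter_subset_inter_left _ Ioo_subset_Ico_self)

theorem Ico_add_inter_Ioo_nonempty_iff {p : ℝ} (hp : 1 < p) (j k : ℝ) :
    (Ico (1 / (p - 1) + k) (p / (p - 1) + k) ∩ Ioo (j * p / (p - 1)) ((j + 1) * p / (p - 1))).Nonempty ↔
      1 + k * (p - 1) < (j + 1) * p ∧ j * p < p + k * (p - 1) := by
  have hq : 0 < p - 1 := sub_pos.mpr hp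
  rw [Set.Ico_inter_Ioo_nonempty_iff (by gcongr) (by gcongr; linarith)]
  simp only [div_add' _ _ _ hq.ne', div_lt_div_iff_of_pos_right hq]

theorem Ico_add_pair_inter_Ioo_nonempty_iff (p j : ℕ) (hp : 1 < p) (k : ℤ) :
    ((Ico (1 / ((p : ℝ) - 1) + k) (p / ((p : ℝ) - 1) + k) ∩
        Ioo ((j : ℝ) * p / ((p : ℝ) - 1)) (((j : ℝ) + 1) * p / ((p : ℝ) - 1))).Nonempty ∧
      (Ico (1 / ((p : ℝ) - 1) + ((k : ℝ) + 1)) (p / ((p : ℝ) - 1) + ((k : ℝ) + 1)) ∩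
        Ioo ((j : ℝ) * p / ((p : ℝ) - 1)) (((j : ℝ) + 1) * p / ((p : ℝ) - 1))).Nonempty) ↔
      k * ((p : ℤ) - 1) ∈ Ioo (((j : ℤ) - 1) * p) (j * p) := by
  have hpR : (1 : ℝ) < p := by exact_mod_cast hp
  rw [Ico_add_inter_Ioo_nonempty_iff hpR, Ico_add_inter_Ioo_nonempty_iff hpR]
  constructor
  · rintro ⟨⟨-, hlo⟩, hhi, -⟩
    constructor
    · exact_mod_cast (by linarith : ((j : ℝ) - 1) * p < k * ((p : ℝ) - 1))
    · exact_mod_cast (by linarith : (k : ℝ) * ((p : ℝ) - 1) < j * p)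
  · rintro ⟨hlo, hhi⟩
    have hloR : ((j : ℝ) - 1) * p < k * ((p : ℝ) - 1) := by exact_mod_cast hlo
    have hhiR : (k : ℝ) * ((p : ℝ) - 1) < j * p := by exact_mod_cast hhi
    refine ⟨⟨?_, ?_⟩, ?_, ?_⟩ <;> linarith

theorem Int.eq_of_mul_mem_Ioo {q a c k l : ℤ} (hac : c ≤ a + q + 1) (hk : k * q ∈ Ioo a c)
    (hl : l * q ∈ Ioo a c) : k = l := by
  obtain ⟨hk₁, hk₂⟩ := hk
  obtain ⟨hl₁, hl₂⟩ := hl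
  rcases lt_trichotomy k l with h | h | h
  · nlinarith
  · exact h
  · nlinarith

theorem stmt_1_general (p : ℕ) (j : ℕ) (b : ℤ)
    (hb0 : 0 ≤ b) (hb1 : b < (p : ℤ) - 1 ∨ (p = 2 ∧ b = 0))
    (hbcong : ((p : ℤ) - 1) ∣ ((j : ℤ) - 1 - b)) :
    (∃! k : ℤ,
      (Set.Ico ((1 : ℝ) / ((p : ℝ) - 1) + (k : ℝ)) ((p : ℝ) / ((p : ℝ) - 1) + (k : ℝ)) ∩
        Set.Ioo ((j : ℝ) * (p : ℝ) / ((p : ℝ) - 1)) (((j : ℝ) + 1) * (p : ℝ) / ((p : ℝ) - 1))).Nonempty ∧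
      (Set.Ico ((1 : ℝ) / ((p : ℝ) - 1) + ((k : ℝ) + 1)) ((p : ℝ) / ((p : ℝ) - 1) + ((k : ℝ) + 1)) ∩
        Set.Ioo ((j : ℝ) * (p : ℝ) / ((p : ℝ) - 1)) (((j : ℝ) + 1) * (p : ℝ) / ((p : ℝ) - 1))).Nonempty) ∧
    (∀ k : ℤ,
      ((Set.Ico ((1 : ℝ) / ((p : ℝ) - 1) + (k : ℝ)) ((p : ℝ) / ((p : ℝ) - 1) + (k : ℝ)) ∩
        Set.Ioo ((j : ℝ) * (p : ℝ) / ((p : ℝ) - 1)) (((j : ℝ) + 1) * (p : ℝ) / ((p : ℝ) - 1))).Nonempty ∧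
      (Set.Ico ((1 : ℝ) / ((p : ℝ) - 1) + ((k : ℝ) + 1)) ((p : ℝ) / ((p : ℝ) - 1) + ((k : ℝ) + 1)) ∩
        Set.Ioo ((j : ℝ) * (p : ℝ) / ((p : ℝ) - 1)) (((j : ℝ) + 1) * (p : ℝ) / ((p : ℝ) - 1))).Nonempty) →
      (p : ℤ) ∣ (k - (b + 1))) := by
  have hb : b < (p : ℤ) - 1 := by
    rcases hb1 with h | ⟨rfl, rfl⟩
    · exact h
    · norm_num
  have hp : 1 < p := by omega
  simp_rw [Ico_add_pair_inter_Ioo_nonempty_iff p j hp]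
  obtain ⟨m, hm⟩ := hbcong
  have hk₀ : (b + 1 + p * m) * ((p : ℤ) - 1) = ((j : ℤ) - 1) * p + ((p : ℤ) - 1 - b) := by
    linear_combination (-(p : ℤ)) * hm
  have hk₀_mem : (b + 1 + p * m) * ((p : ℤ) - 1) ∈ Ioo (((j : ℤ) - 1) * p) (j * p) := by
    constructor <;> linarith
  have hunique k (hk : k * ((p : ℤ) - 1) ∈ Ioo (((j : ℤ) - 1) * p) (j * p)) : k = b + 1 + p * m :=
    Int.eq_of_mul_mem_Ioo (by linarith) hk hk₀_mem
  refine ⟨⟨b + 1 + p * m, hk₀_mem, hunique⟩, fun k hk => ⟨m, ?_⟩⟩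
  rw [hunique k hk]
  ring

/-- Let `p` be a prime.  For every integer `j ≥ 0` there exists a unique
integer `k` such that both translated intervals `[1/(p-1), p/(p-1)) + k` and
`[1/(p-1), p/(p-1)) + k + 1` meet the open interval `(jp/(p-1), (j+1)p/(p-1))`.
Moreover, writing `j - 1 ≡ b (mod p-1)` with `0 ≤ b < p - 1` (for `p = 2` this
forces `b = 0`), this unique `k` satisfies `k ≡ b + 1 (mod p)`. -/
theorem stmt_1 (p : ℕ) (hp : p.Prime) (j : ℕ) (b : ℤ)
    (hb0 : 0 ≤ b) (hb1 : b < (p : ℤ) - 1 ∨ (p = 2 ∧ b = 0))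
    (hbcong : ((p : ℤ) - 1) ∣ ((j : ℤ) - 1 - b)) :
    (∃! k : ℤ,
      (Set.Ico ((1 : ℝ) / ((p : ℝ) - 1) + (k : ℝ)) ((p : ℝ) / ((p : ℝ) - 1) + (k : ℝ)) ∩
        Set.Ioo ((j : ℝ) * (p : ℝ) / ((p : ℝ) - 1)) (((j : ℝ) + 1) * (p : ℝ) / ((p : ℝ) - 1))).Nonempty ∧
      (Set.Ico ((1 : ℝ) / ((p : ℝ) - 1) + ((k : ℝ) + 1)) ((p : ℝ) / ((p : ℝ) - 1) + ((k : ℝ) + 1)) ∩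
        Set.Ioo ((j : ℝ) * (p : ℝ) / ((p : ℝ) - 1)) (((j : ℝ) + 1) * (p : ℝ) / ((p : ℝ) - 1))).Nonempty) ∧
    (∀ k : ℤ,
      ((Set.Ico ((1 : ℝ) / ((p : ℝ) - 1) + (k : ℝ)) ((p : ℝ) / ((p : ℝ) - 1) + (k : ℝ)) ∩
        Set.Ioo ((j : ℝ) * (p : ℝ) / ((p : ℝ) - 1)) (((j : ℝ) + 1) * (p : ℝ) / ((p : ℝ) - 1))).Nonempty ∧
      (Set.Ico ((1 : ℝ) / ((p : ℝ) - 1) + ((k : ℝ) + 1)) ((p : ℝ) / ((p : ℝ) - 1) + ((k : ℝ) + 1)) ∩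
        Set.Ioo ((j : ℝ) * (p : ℝ) / ((p : ℝ) - 1)) (((j : ℝ) + 1) * (p : ℝ) / ((p : ℝ) - 1))).Nonempty) →
      (p : ℤ) ∣ (k - (b + 1))) :=
  stmt_1_general p j b hb0 hb1 hbcong
end

section
/- Let p be a prime, f ≥ 1, and (a_0,...,a_{f-1}) ∈ {1,...,p}^f with not all entries equal to p. For i ∈ Z/fZ set n_i = Σ_{j=1}^{f} a_{i+j} p^{f-j} (indices mod f). Then for every j with 0 ≤ j < e (for any positive integer e), the number of pairs (i, m) with i ∈ {0,...,f-1} and m an integer satisfying jp/(p-1) < m/(p^f-1) < (j+1)p/(p-1), p ∤ m, and m ≡ n_i (mod p^f - 1), counted with multiplicity over i, equals f. -/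
/-!
Put `P = p ^ f - 1`. Shifting the Horner sum gives `p * n (i - 1) = n i + a i * P`, so
`n i ≡ p * n (i - 1) [ZMOD P]`. After multiplying by `p - 1` the window is `(p * lo, p * hi)` with
`lo = j P / (p - 1)` and `hi = (j + 1) P / (p - 1)`; since `p * lo = lo + j P` and
`p * hi = hi + j P + P`, it contains `e (n i) + 1` integers `≡ n i`, where `e r` counts the integers
`≡ r` in `(lo, hi)`. As `p` is a unit mod `P`, the multiples of `p` among them are `p` times the
integers `≡ n (i - 1)` in `(lo, hi)`. Hence the `i`-th count is `1 + e (n i) - e (n (i - 1))`, which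
telescopes over `ZMod f` to `f`.
-/

theorem Set.ncard_eq_sum_ncard_fiber {α β : Type*} [Fintype α] (s : Set (α × β))
    (hs : ∀ a, {b | (a, b) ∈ s}.Finite) : s.ncard = ∑ a, {b | (a, b) ∈ s}.ncard := by
  have := fun a => (hs a).to_subtype
  rw [← Nat.card_coe_set_eq, Nat.card_congr (Equiv.setProdEquivSigma s), Nat.card_sigma]
  rfl

theorem Fintype.sum_eq_card_of_add_perm {ι : Type*} [Fintype ι] (σ : Equiv.Perm ι) (c e : ι → ℕ)
    (h : ∀ i, c i + e (σ i) = e i + 1) : ∑ i, c i = Fintype.card ι := by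
  have hsum := Finset.sum_congr rfl fun i (_ : i ∈ Finset.univ) => h i
  rw [Finset.sum_add_distrib, Finset.sum_add_distrib, Equiv.sum_comp σ e] at hsum
  rw [Finset.sum_const, Finset.card_univ, smul_eq_mul, mul_one] at hsum
  omega

section ModEqIoo

variable {K : Type*} [Field K] [LinearOrder K]

def Int.modEqIoo (x y : K) (P r : ℤ) : Set ℤ := {m | x < m ∧ (m : K) < y ∧ m ≡ r [ZMOD P]}

namespace Int

theorem finite_modEqIoo [FloorRing K] (x y : K) (P r : ℤ) : (modEqIoo x y P r).Finite :=
  (Set.finite_Ioo ⌊x⌋ ⌈y⌉).subset fun _ hm => ⟨floor_lt.mpr hm.1, lt_ceil.mpr hm.2.1⟩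

variable [IsStrictOrderedRing K]

theorem ncard_modEqIoo_add_mul_period (x y : K) (P r k : ℤ) :
    (modEqIoo (x + k * P) (y + k * P) P r).ncard = (modEqIoo x y P r).ncard := by
  have himage : modEqIoo (x + k * P) (y + k * P) P r = (· + k * P) '' modEqIoo x y P r := by
    ext m
    rw [Set.image_add_right]
    simp only [modEqIoo, Set.mem_preimage, Set.mem_ofPred_eq]
    push_cast
    rw [show m + -(k * P) = m + -k * P by ring, add_mul_modulus_modEq_iff]
    constructor <;> rintro ⟨h1, h2, h3⟩ <;> exact ⟨by linarith, by linarith, h3⟩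
  rw [himage, Set.ncard_image_of_injective _ (add_left_injective _)]

theorem ncard_modEqIoo_dvd {p P r s : ℤ} (hp : 0 < p) (hpP : IsCoprime p P)
    (hr : r ≡ p * s [ZMOD P]) (x y : K) :
    {m ∈ modEqIoo (p * x) (p * y) P r | p ∣ m}.ncard = (modEqIoo x y P s).ncard := by
  have hp' : (0 : K) < p := by exact_mod_cast hp
  have himage : {m ∈ modEqIoo (p * x) (p * y) P r | p ∣ m} = (p * ·) '' modEqIoo x y P s := by
    ext m
    simp only [modEqIoo, Set.mem_image, Set.mem_ofPred_eq]
    constructor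
    · rintro ⟨⟨h1, h2, h3⟩, m', rfl⟩
      push_cast at h1 h2
      have hdvd : P ∣ p * (s - m') := by
        rw [mul_sub]
        exact modEq_iff_dvd.mp (h3.trans hr)
      exact ⟨m', ⟨_root_.lt_of_mul_lt_mul_left h1 hp'.le, _root_.lt_of_mul_lt_mul_left h2 hp'.le,
        modEq_iff_dvd.mpr (hpP.symm.dvd_of_dvd_mul_left hdvd)⟩, rfl⟩
    · rintro ⟨m', ⟨h1, h2, h3⟩, rfl⟩
      push_cast
      exact ⟨⟨by gcongr, by gcongr, (h3.mul_left p).trans hr.symm⟩, dvd_mul_right p m'⟩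
  rw [himage, Set.ncard_image_of_injective _ (mul_right_injective₀ hp.ne')]

theorem ncard_modEq_Ico_eq_one [FloorRing K] {P : ℤ} (hP : 0 < P) (x : K) (r : ℤ) :
    {m : ℤ | x ≤ m ∧ (m : K) < x + P ∧ m ≡ r [ZMOD P]}.ncard = 1 := by
  have hP' : (0 : K) < P := by exact_mod_cast hP
  refine Set.ncard_eq_one.mpr ⟨r + P * ⌈(x - r) / P⌉, Set.ext fun m => ?_⟩
  simp only [Set.mem_ofPred_eq, Set.mem_singleton_iff, modEq_comm (b := r), modEq_iff_add_fac]
  constructor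
  · rintro ⟨hlo, hhi, t, rfl⟩
    push_cast at hlo hhi
    congr 2
    refine (ceil_eq_iff.mpr ⟨?_, ?_⟩).symm
    · rw [lt_div_iff₀ hP']; nlinarith
    · rw [div_le_iff₀ hP']; nlinarith
  · rintro rfl
    have h := ceil_eq_iff.mp (rfl : ⌈(x - r) / P⌉ = _)
    rw [lt_div_iff₀ hP', div_le_iff₀ hP'] at h
    push_cast
    exact ⟨by linarith, by linarith, _, rfl⟩

theorem ncard_modEqIoo_add_period [FloorRing K] {P : ℤ} (hP : 0 < P) {x y : K} (hxy : x < y) (r : ℤ) :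
    (modEqIoo x (y + P) P r).ncard = (modEqIoo x y P r).ncard + 1 := by
  have hsplit : modEqIoo x (y + P) P r =
      modEqIoo x y P r ∪ {m : ℤ | y ≤ m ∧ (m : K) < y + P ∧ m ≡ r [ZMOD P]} := by
    ext m
    simp only [modEqIoo, Set.mem_union, Set.mem_ofPred_eq]
    constructor
    · rintro ⟨h1, h2, h3⟩
      rcases lt_or_ge (m : K) y with h | h
      · exact Or.inl ⟨h1, h, h3⟩
      · exact Or.inr ⟨h, h2, h3⟩
    · rintro (⟨h1, h2, h3⟩ | ⟨h1, h2, h3⟩)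
      · exact ⟨h1, by linarith [(Int.cast_pos.mpr hP : (0 : K) < P)], h3⟩
      · exact ⟨by linarith, h2, h3⟩
  have hdisj : Disjoint (modEqIoo x y P r) {m : ℤ | y ≤ m ∧ (m : K) < y + P ∧ m ≡ r [ZMOD P]} :=
    Set.disjoint_left.mpr fun _ h1 h2 => (not_le.mpr h1.2.1) h2.1
  have hone := ncard_modEq_Ico_eq_one hP y r
  rw [hsplit, Set.ncard_union_eq hdisj (finite_modEqIoo x y P r)
    (Set.finite_of_ncard_ne_zero (by omega)), hone]

theorem ncard_modEqIoo_not_dvd_add_ncard [FloorRing K] {p P r s : ℤ} (hp : 1 < p) (hP : 0 < P)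
    (hpP : IsCoprime p P) (hr : r ≡ p * s [ZMOD P]) (k : ℤ) :
    {m ∈ modEqIoo (p * (k * P / (p - 1) : K)) (p * ((k + 1) * P / (p - 1))) P r | ¬ p ∣ m}.ncard
        + (modEqIoo (k * P / (p - 1) : K) ((k + 1) * P / (p - 1)) P s).ncard
      = (modEqIoo (k * P / (p - 1) : K) ((k + 1) * P / (p - 1)) P r).ncard + 1 := by
  have hd : (0 : K) < p - 1 := by
    rw [sub_pos]; exact_mod_cast hp
  have hP' : (0 : K) < P := by exact_mod_cast hP
  have hlo : (p : K) * (k * P / (p - 1)) = k * P / (p - 1) + k * P := by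
    field_simp; ring
  have hhi : (p : K) * ((k + 1) * P / (p - 1)) = ((k + 1) * P / (p - 1) + k * P) + P := by
    field_simp; ring
  have hlt : (k * P / (p - 1) : K) + k * P < (k + 1) * P / (p - 1) + k * P := by
    gcongr; linarith
  have hall : (modEqIoo (p * (k * P / (p - 1) : K)) (p * ((k + 1) * P / (p - 1))) P r).ncard
      = (modEqIoo (k * P / (p - 1) : K) ((k + 1) * P / (p - 1)) P r).ncard + 1 := by
    rw [hlo, hhi, ncard_modEqIoo_add_period hP hlt, ncard_modEqIoo_add_mul_period]
  rw [← ncard_modEqIoo_dvd (by omega) hpP hr, ← hall, add_comm]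
  exact Set.ncard_inter_add_ncard_sdiff_eq_ncard _ _ (finite_modEqIoo _ _ P r)

theorem setOf_window_eq_modEqIoo {q P r k : ℤ} (hq : 1 < q) :
    {m : ℤ | k * q * P < m * (q - 1) ∧ m * (q - 1) < (k + 1) * q * P ∧ ¬ q ∣ m ∧ P ∣ m - r} =
      {m ∈ modEqIoo (q * (k * P / (q - 1) : K)) (q * ((k + 1) * P / (q - 1))) P r | ¬ q ∣ m} := by
  have hd : (0 : K) < q - 1 := by
    rw [sub_pos]; exact_mod_cast hq
  ext m
  have hlo : k * q * P < m * (q - 1) ↔ (q : K) * (k * P) < m * (q - 1) := by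
    rw [mul_right_comm, mul_comm]; exact_mod_cast Iff.rfl
  have hhi : m * (q - 1) < (k + 1) * q * P ↔ (m : K) * (q - 1) < q * ((k + 1) * P) := by
    rw [mul_right_comm _ q, mul_comm _ q]; exact_mod_cast Iff.rfl
  simp only [modEqIoo, Set.mem_ofPred_eq, modEq_iff_dvd, dvd_sub_comm (b := r),
    ← mul_div_assoc, div_lt_iff₀ hd, lt_div_iff₀ hd, hlo, hhi]
  tauto

end Int

end ModEqIoo

def cyclicHorner {R : Type*} [CommRing R] {f : ℕ} (a : ZMod f → R) (x : R) (i : ZMod f) : R :=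
  ∑ j : Fin f, a (i + j + 1) * x ^ (f - 1 - j)

theorem mul_cyclicHorner_sub_one {R : Type*} [CommRing R] {f : ℕ} [NeZero f] (a : ZMod f → R)
    (x : R) (i : ZMod f) :
    x * cyclicHorner a x (i - 1) = cyclicHorner a x i + a i * (x ^ f - 1) := by
  obtain ⟨f, rfl⟩ := Nat.exists_eq_add_one_of_ne_zero (NeZero.ne f)
  set tail := ∑ j : Fin f, a (i + j + 1) * x ^ (f - j)
  have hprev : x * cyclicHorner a x (i - 1) = a i * x ^ (f + 1) + tail := by
    rw [cyclicHorner, Finset.mul_sum, Fin.sum_univ_succ]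
    simp only [Fin.val_zero, Fin.val_succ, Nat.cast_zero, Nat.cast_succ, Nat.add_sub_cancel]
    congr 1
    · rw [add_zero, sub_add_cancel, Nat.sub_zero, pow_succ]; ring
    · refine Finset.sum_congr rfl fun j _ => ?_
      rw [show i - 1 + (j + 1) + 1 = i + j + 1 by ring, show f - j = f - (j + 1) + 1 by omega,
        pow_succ]
      ring
  have hcur : cyclicHorner a x i = tail + a i := by
    rw [cyclicHorner, Fin.sum_univ_castSucc]
    simp only [Fin.val_castSucc, Fin.val_last, Nat.add_sub_cancel, Nat.sub_self, pow_zero, mul_one]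
    rw [add_assoc, ← Nat.cast_succ, ZMod.natCast_self, add_zero]
  rw [hprev, hcur]
  ring

open Int in
theorem stmt_2_general (p f : ℕ) (hp : p.Prime) (hf : 0 < f)
    (a : ZMod f → ℤ)
    (n : ZMod f → ℤ)
    (hn : ∀ i, n i = ∑ j : Fin f, a (i + ((j : ℕ) : ZMod f) + 1) * (p : ℤ) ^ (f - 1 - (j : ℕ)))
    (j : ℕ) :
    {q : ZMod f × ℤ |
        (j : ℤ) * (p : ℤ) * ((p : ℤ) ^ f - 1) < q.2 * ((p : ℤ) - 1) ∧
        q.2 * ((p : ℤ) - 1) < ((j : ℤ) + 1) * (p : ℤ) * ((p : ℤ) ^ f - 1) ∧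
        ¬ ((p : ℤ) ∣ q.2) ∧
        ((p : ℤ) ^ f - 1) ∣ (q.2 - n q.1)}.ncard = f := by
  have : NeZero f := ⟨hf.ne'⟩
  have hp1 : (1 : ℤ) < p := mod_cast hp.one_lt
  generalize (p : ℤ) = q at hp1 hn ⊢
  set P : ℤ := q ^ f - 1
  have hP : 0 < P := sub_pos.mpr (one_lt_pow₀ hp1 hf.ne')
  have hqP : IsCoprime q P := ⟨q ^ (f - 1), -1, by rw [pow_sub_one_mul hf.ne']; ring⟩
  have hrec : ∀ i, n i ≡ q * n (i - 1) [ZMOD P] := fun i => by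
    rw [show n = cyclicHorner a q from funext hn, mul_cyclicHorner_sub_one]
    exact modEq_iff_dvd.mpr ⟨a i, by ring⟩
  have hfiber : ∀ i, {m | (j : ℤ) * q * P < m * (q - 1) ∧ m * (q - 1) < ((j : ℤ) + 1) * q * P ∧
      ¬ q ∣ m ∧ P ∣ m - n i} =
      {m ∈ modEqIoo (q * (((j : ℤ) : ℚ) * P / (q - 1))) (q * ((((j : ℤ) : ℚ) + 1) * P / (q - 1)))
        P (n i) | ¬ q ∣ m} := fun i => setOf_window_eq_modEqIoo hp1
  refine (Set.ncard_eq_sum_ncard_fiber _ fun i => ?_).trans ?_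
  · exact hfiber i ▸ (finite_modEqIoo _ _ _ _).subset (Set.sep_subset _ _)
  refine (Finset.sum_congr rfl fun i _ => congrArg Set.ncard (hfiber i)).trans ?_
  exact (Fintype.sum_eq_card_of_add_perm (Equiv.subRight 1) _
    (fun i => (modEqIoo (((j : ℤ) : ℚ) * P / (q - 1)) ((((j : ℤ) : ℚ) + 1) * P / (q - 1)) P (n i)).ncard)
    fun i => ncard_modEqIoo_not_dvd_add_ncard hp1 hP hqP (hrec i) j).trans (ZMod.card f)

/-- Let `p` be a prime, `f ≥ 1`, and `(a 0, …, a (f-1)) ∈ {1,…,p}^f`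
with not all entries equal to `p`.  For `i ∈ ℤ/fℤ` set
`n i = ∑_{j=1}^{f} a (i+j) * p^(f-j)` (indices mod `f`).  Then for every `j ≥ 0`
(in particular for every `0 ≤ j < e` for any positive `e`), the number of pairs
`(i, m)` with `i ∈ ℤ/fℤ` and `m ∈ ℤ` satisfying
`jp/(p-1) < m/(p^f-1) < (j+1)p/(p-1)`, `p ∤ m`, and `m ≡ n i (mod p^f - 1)`
equals `f`. -/
theorem stmt_2 (p f : ℕ) (hp : p.Prime) (hf : 0 < f)
    (a : ZMod f → ℤ) (ha : ∀ i, 1 ≤ a i ∧ a i ≤ (p : ℤ)) (hnp : ¬ ∀ i, a i = (p : ℤ))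
    (n : ZMod f → ℤ)
    (hn : ∀ i, n i = ∑ j : Fin f, a (i + ((j : ℕ) : ZMod f) + 1) * (p : ℤ) ^ (f - 1 - (j : ℕ)))
    (j : ℕ) :
    {q : ZMod f × ℤ |
        (j : ℤ) * (p : ℤ) * ((p : ℤ) ^ f - 1) < q.2 * ((p : ℤ) - 1) ∧
        q.2 * ((p : ℤ) - 1) < ((j : ℤ) + 1) * (p : ℤ) * ((p : ℤ) ^ f - 1) ∧
        ¬ ((p : ℤ) ∣ q.2) ∧
        ((p : ℤ) ^ f - 1) ∣ (q.2 - n q.1)}.ncard = f :=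
  stmt_2_general p f hp hf a n hn j
end

section
/- Let p be a prime, f ≥ 1, and (a_0,...,a_{f-1}) ∈ {1,...,p}^f not all equal to p, with n_i = Σ_{j=1}^{f} a_{i+j} p^{f-j}. If n_t ≡ n_u (mod p^f − 1) for distinct t, u ∈ {0,...,f-1}, then the cyclic shift of (a_0,...,a_{f-1}) by t − u equals the original tuple; i.e., the tuple has nontrivial stabilizer under cyclic rotation. -/
/-!
Write `n t - n u = ∑ⱼ cⱼ p^(f-1-j)` with `cⱼ = a (t+j+1) - a (u+j+1)`, so `|cⱼ| ≤ p - 1`.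
Since some `a i` is `< p`, one of the digits of `n t - n u` (and of `n u - n t`) is `< p - 1`,
hence `|n t - n u| < p^f - 1`, and the congruence forces `n t = n u`. Base-`p` expansions
with digits of absolute value `< p` are unique, so every `cⱼ` vanishes, which is the rotation
invariance.
-/

open Finset

lemma sum_mul_pow_lt_pow_sub_one {p : ℤ} (hp : 0 < p) {f : ℕ} {c : ℕ → ℤ}
    (hc : ∀ j < f, c j ≤ p - 1) {j₀ : ℕ} (hj₀ : j₀ < f) (hcj₀ : c j₀ < p - 1) :
    ∑ j ∈ range f, c j * p ^ (f - 1 - j) < p ^ f - 1 := by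
  have hgeom : ∑ j ∈ range f, (p - 1) * p ^ (f - 1 - j) = p ^ f - 1 := by
    rw [← mul_sum, sum_range_reflect (p ^ ·) f, mul_comm, geom_sum_mul]
  rw [← hgeom]
  exact sum_lt_sum
    (fun j hj => mul_le_mul_of_nonneg_right (hc j (mem_range.1 hj)) (by positivity))
    ⟨j₀, mem_range.2 hj₀, mul_lt_mul_of_pos_right hcj₀ (by positivity)⟩

lemma eq_zero_of_sum_mul_pow_eq_zero {p : ℤ} (hp : 0 < p) {f : ℕ} {c : ℕ → ℤ}
    (hc : ∀ j < f, |c j| < p) (h : ∑ j ∈ range f, c j * p ^ (f - 1 - j) = 0) :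
    ∀ j < f, c j = 0 := by
  induction f with
  | zero => simp
  | succ f ih =>
    have horner : ∑ j ∈ range (f + 1), c j * p ^ (f + 1 - 1 - j)
        = p * ∑ j ∈ range f, c j * p ^ (f - 1 - j) + c f := by
      rw [sum_range_succ, mul_sum, Nat.add_sub_cancel, Nat.sub_self, pow_zero, mul_one]
      congr 1
      refine sum_congr rfl fun j hj => ?_
      rw [show f - j = f - 1 - j + 1 by have := mem_range.1 hj; omega, pow_succ]
      ring
    rw [horner] at h
    have hlast : c f = 0 :=
      Int.eq_zero_of_abs_lt_dvd ⟨-∑ j ∈ range f, c j * p ^ (f - 1 - j), by linarith⟩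
        (hc f f.lt_succ_self)
    rw [hlast, add_zero, mul_eq_zero] at h
    have hinit := ih (fun j hj => hc j (by omega)) (h.resolve_left hp.ne')
    intro j hj
    rcases Nat.lt_succ_iff_lt_or_eq.1 hj with hj | rfl
    exacts [hinit j hj, hlast]

section Rotation

variable {f : ℕ} [NeZero f] {p : ℤ} {a : ZMod f → ℤ}

lemma exists_rotated_sub_lt (ha : ∀ i, 1 ≤ a i ∧ a i ≤ p) (hnp : ¬ ∀ i, a i = p)
    (s s' : ZMod f) : ∃ j < f, a (s + j + 1) - a (s' + j + 1) < p - 1 := by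
  obtain ⟨i, hi⟩ := not_forall.1 hnp
  refine ⟨(i - s - 1).val, ZMod.val_lt _, ?_⟩
  rw [ZMod.natCast_zmod_val, show s + (i - s - 1) + 1 = i by ring]
  have := ha i
  have := ha (s' + (i - s - 1) + 1)
  omega

lemma sum_rotated_sub_mul_pow_lt (ha : ∀ i, 1 ≤ a i ∧ a i ≤ p) (hnp : ¬ ∀ i, a i = p)
    (s s' : ZMod f) :
    ∑ j ∈ range f, (a (s + j + 1) - a (s' + j + 1)) * p ^ (f - 1 - j) < p ^ f - 1 := by
  obtain ⟨j₀, hj₀, hlt⟩ := exists_rotated_sub_lt ha hnp s s'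
  have hp : 0 < p := by linarith [ha 0]
  exact sum_mul_pow_lt_pow_sub_one hp (fun j _ => by linarith [ha (s + j + 1), ha (s' + j + 1)])
    hj₀ hlt

end Rotation

theorem stmt_3_general (p f : ℕ) (hf : 0 < f)
    (a : ZMod f → ℤ) (ha : ∀ i, 1 ≤ a i ∧ a i ≤ (p : ℤ)) (hnp : ¬ ∀ i, a i = (p : ℤ))
    (n : ZMod f → ℤ)
    (hn : ∀ i, n i = ∑ j : Fin f, a (i + ((j : ℕ) : ZMod f) + 1) * (p : ℤ) ^ (f - 1 - (j : ℕ)))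
    (t u : ZMod f)
    (hcong : ((p : ℤ) ^ f - 1) ∣ (n t - n u)) :
    ∀ i : ZMod f, a (i + (t - u)) = a i := by
  have : NeZero f := ⟨hf.ne'⟩
  have hp : (0 : ℤ) < p := by linarith [ha 0]
  have hdiff : ∀ s s', n s - n s'
      = ∑ j ∈ range f, (a (s + j + 1) - a (s' + j + 1)) * (p : ℤ) ^ (f - 1 - j) := by
    intro s s'
    rw [hn, hn, ← sum_sub_distrib,
      ← Fin.sum_univ_eq_sum_range (fun j => (a (s + j + 1) - a (s' + j + 1)) * (p : ℤ) ^ (f - 1 - j))]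
    simp only [sub_mul]
  have hbound : |n t - n u| < (p : ℤ) ^ f - 1 := by
    have hlt := sum_rotated_sub_mul_pow_lt ha hnp t u
    have hgt := sum_rotated_sub_mul_pow_lt ha hnp u t
    rw [← hdiff] at hlt hgt
    exact abs_lt.2 ⟨by linarith, hlt⟩
  have hdigits := eq_zero_of_sum_mul_pow_eq_zero hp
    (fun j _ => abs_lt.2 ⟨by linarith [ha (t + j + 1), ha (u + j + 1)],
      by linarith [ha (t + j + 1), ha (u + j + 1)]⟩)
    ((hdiff t u).symm.trans (Int.eq_zero_of_abs_lt_dvd hcong hbound))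
  intro i
  have h := hdigits (i - u - 1).val (ZMod.val_lt _)
  rw [ZMod.natCast_zmod_val, show u + (i - u - 1) + 1 = i by ring,
    show t + (i - u - 1) + 1 = i + (t - u) by ring, sub_eq_zero] at h
  exact h

/-- Let `p` be a prime, `f ≥ 1`, and `(a 0, …, a (f-1)) ∈ {1,…,p}^f`
not all equal to `p`, with `n i = ∑_{j=1}^{f} a (i+j) * p^(f-j)` (indices mod `f`).
If `n t ≡ n u (mod p^f − 1)` for distinct `t, u`, then the cyclic shift of `a`
by `t − u` equals `a`; i.e. `a` has nontrivial stabilizer under cyclic rotation. -/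
theorem stmt_3 (p f : ℕ) (hp : p.Prime) (hf : 0 < f)
    (a : ZMod f → ℤ) (ha : ∀ i, 1 ≤ a i ∧ a i ≤ (p : ℤ)) (hnp : ¬ ∀ i, a i = (p : ℤ))
    (n : ZMod f → ℤ)
    (hn : ∀ i, n i = ∑ j : Fin f, a (i + ((j : ℕ) : ZMod f) + 1) * (p : ℤ) ^ (f - 1 - (j : ℕ)))
    (t u : ZMod f) (htu : t ≠ u)
    (hcong : ((p : ℤ) ^ f - 1) ∣ (n t - n u)) :
    ∀ i : ZMod f, a (i + (t - u)) = a i :=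
  stmt_3_general p f hf a ha hnp n hn t u hcong
end

section
/- Let M be a finite extension of Q_p containing a primitive p-th root of unity ζ_p, with uniformiser π and e' = v_M(p), and write p = c·π^{e'} with c ∈ O_M^×. Then −c is a (p−1)-st power in O_M^× modulo π; equivalently, the residue of −c has a (p−1)-st root in the residue field of M. -/
open Finset IsLocalRing

lemma unit_cancel {O : Type*} [CommRing O] [IsDomain O] {π : O} (hπ : Irreducible π)
    {u1 u2 : O} (h1 : IsUnit u1) (h2 : IsUnit u2) {a b : ℕ}
    (h : u1 * π ^ a = u2 * π ^ b) : u1 = u2 := by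
  have hπ0 : π ≠ 0 := hπ.ne_zero
  wlog hab : a ≤ b generalizing u1 u2 a b
  · exact (this h2 h1 h.symm (le_of_not_ge hab)).symm
  obtain ⟨d, rfl⟩ := Nat.exists_eq_add_of_le hab
  rw [pow_add, ← mul_assoc] at h
  have h' : u1 = u2 * π ^ d := by
    apply mul_right_cancel₀ (pow_ne_zero a hπ0)
    linear_combination h
  rcases Nat.eq_zero_or_pos d with rfl | hd
  · simpa using h'
  · exfalso
    apply hπ.not_isUnit
    have : π ∣ u1 := h' ▸ (dvd_pow_self π hd.ne').mul_left u2
    exact isUnit_of_dvd_unit this h1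

/-- Let `O` be the ring of integers of a finite extension `M` of `ℚ_p`
containing a primitive `p`-th root of unity `ζ` (formalized: a discrete valuation
ring containing `ζ ≠ 1` with `ζ^p = 1`), with uniformiser `π` and `e' = v_M(p) ≥ 1`,
and write `p = c·π^{e'}` with `c` a unit.  Then `−c` is a `(p−1)`-st power modulo `π`;
i.e. the residue of `−c` has a `(p−1)`-st root in the residue field of `M`. -/
theorem stmt_6 (p : ℕ) (hp : p.Prime)
    (O : Type*) [CommRing O] [IsDomain O] [IsDiscreteValuationRing O]
    (π : O) (hπ : Irreducible π)
    (c : O) (hc : IsUnit c) (e' : ℕ) (he'pos : 0 < e') (he : (p : O) = c * π ^ e')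
    (ζ : O) (hζ : ζ ^ p = 1) (hζ1 : ζ ≠ 1) :
    ∃ u : IsLocalRing.ResidueField O,
      u ^ (p - 1) = IsLocalRing.residue O (-c) := by
  set k := ResidueField O
  set res := IsLocalRing.residue O with hres
  -- π is in the maximal ideal, so res π = 0
  have hπm : res π = 0 := by
    rw [residue_eq_zero_iff]
    exact (IsDiscreteValuationRing.irreducible_iff_uniformizer π).mp hπ ▸
      Ideal.mem_span_singleton_self π
  have hpk : (p : k) = 0 := by
    have := congrArg res he
    rw [map_natCast, map_mul, map_pow, hπm, zero_pow he'pos.ne', mul_zero] at this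
    exact this
  -- residue of ζ is 1
  have hζres : res ζ = 1 := by
    have h1 : (res ζ - 1 + 1) ^ p = 1 := by
      rw [sub_add_cancel, ← map_pow, hζ, map_one]
    obtain ⟨r, hr⟩ := exists_add_pow_prime_eq hp (res ζ - 1) 1
    rw [hr, one_pow, hpk, zero_mul, zero_mul, zero_mul, add_zero] at h1
    have : (res ζ - 1) ^ p = 0 := by linear_combination h1
    have := pow_eq_zero_iff hp.ne_zero |>.mp this
    exact sub_eq_zero.mp this
  -- the element λ = ζ - 1
  set l : O := ζ - 1 with hl
  have hl0 : l ≠ 0 := sub_ne_zero.mpr hζ1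
  have hlres : res l = 0 := by rw [hl, map_sub, map_one, hζres, sub_self]
  -- binomial expansion
  have hbin := add_pow_prime_eq hp l (1 : O)
  rw [show l + 1 = ζ by ring, hζ, one_pow] at hbin
  set t : O := ∑ kk ∈ Ioo 0 p, l ^ (kk - 1) * ((p.choose kk / p : ℕ) : O) with ht
  have hT : ∑ kk ∈ Ioo 0 p, l ^ kk * 1 ^ (p - kk) * ((p.choose kk / p : ℕ) : O) = l * t := by
    rw [ht, Finset.mul_sum]
    apply Finset.sum_congr rfl
    intro kk hkk
    have hk1 : 1 ≤ kk := (Finset.mem_Ioo.mp hkk).1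
    rw [one_pow, mul_one, ← mul_assoc, ← pow_succ', Nat.sub_add_cancel hk1]
  simp only [one_pow, mul_one] at hbin
  rw [← ht] at hbin
  -- λ^(p-1) = -(p * t)
  have hkey : l ^ (p - 1) = -((p : O) * t) := by
    have hp1 : l ^ p = l * l ^ (p - 1) := by
      rw [← pow_succ', Nat.sub_add_cancel hp.one_lt.le]
    have h0 : l * (l ^ (p - 1) + (p : O) * t) = 0 := by
      rw [hp1] at hbin
      linear_combination -hbin
    rcases mul_eq_zero.mp h0 with h | h
    · exact absurd h hl0
    · linear_combination h
  -- residue of t is 1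
  have htres : res t = 1 := by
    rw [ht, map_sum]
    rw [Finset.sum_eq_single 1]
    · simp [hlres, Nat.choose_one_right, Nat.div_self hp.pos]
    · intro kk hkk hkk1
      have hk1 : 1 ≤ kk := (Finset.mem_Ioo.mp hkk).1
      have : 1 ≤ kk - 1 := by omega
      rw [map_mul, map_pow, hlres, zero_pow (by omega : kk - 1 ≠ 0), zero_mul]
    · intro h
      exact absurd (Finset.mem_Ioo.mpr ⟨Nat.one_pos, hp.one_lt⟩) h
  have htunit : IsUnit t := by
    by_contra h
    have : res t = 0 := (residue_eq_zero_iff t).mpr h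
    rw [htres] at this; exact one_ne_zero this
  -- λ = u * π^n
  obtain ⟨n, u, hun⟩ := IsDiscreteValuationRing.eq_unit_mul_pow_irreducible hl0 hπ
  have hmain : (u : O) ^ (p - 1) * π ^ (n * (p - 1)) = (-(c * t)) * π ^ e' := by
    rw [pow_mul, ← mul_pow, ← hun, hkey, he]; ring
  have hcu : (u : O) ^ (p - 1) = -(c * t) :=
    unit_cancel hπ (u.isUnit.pow _) ((hc.mul htunit).neg) hmain
  refine ⟨res u, ?_⟩
  rw [← map_pow, hcu, map_neg, map_mul, htres, mul_one, map_neg]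
end

section
/- Let M be a finite extension of Q_p containing ζ_p, with residue field of characteristic p, and set n = e'/(p-1) where e' = v_M(p), m = pn. Then the map U_n/U_{n+1} → U_m/U_{m+1} induced by x ↦ x^p is given on residues by s ↦ s^p + c̄ s (where p = c π^{e'}), and its kernel and cokernel each have cardinality p. -/
open IsLocalRing Polynomial Finset

/-- Let `O` be the ring of integers of a finite extension `M` of `ℚ_p`
containing a primitive `p`-th root of unity `ζ` (formalized: a discrete valuation ring
with finite residue field `l`, containing `ζ ≠ 1` with `ζ^p = 1`), with uniformiser `π`,
`e' = v_M(p)` (so `p = c·π^{e'}` with `c` a unit), `n = e'/(p-1)` and `m = p·n`.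
Then the map `U_n/U_{n+1} → U_m/U_{m+1}` induced by `x ↦ x^p` is given on residues by
`s ↦ s^p + c̄·s` (first conjunct: `(1+sπ^n)^p ≡ 1 + (s^p+cs)π^m mod π^{m+1}`), and the
induced additive map `s ↦ s^p + c̄ s` on `l` has kernel of cardinality `p` (second
conjunct) and cokernel of cardinality `p` (third conjunct: `#l = p·#(range)`). -/
theorem stmt_7 (p : ℕ) (hp : p.Prime)
    (O : Type*) [CommRing O] [IsDomain O] [IsDiscreteValuationRing O]
    [Finite (IsLocalRing.ResidueField O)]
    (π : O) (hπ : Irreducible π)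
    (c : O) (hc : IsUnit c) (n e' m : ℕ) (hn : 0 < n)
    (he' : e' = (p - 1) * n) (hm : m = p * n)
    (hpc : (p : O) = c * π ^ e')
    (ζ : O) (hζ : ζ ^ p = 1) (hζ1 : ζ ≠ 1) :
    (∀ s : O, π ^ (m + 1) ∣ ((1 + s * π ^ n) ^ p - (1 + (s ^ p + c * s) * π ^ m))) ∧
    Nat.card {s : IsLocalRing.ResidueField O |
        s ^ p + IsLocalRing.residue O c * s = 0} = p ∧
    Nat.card (IsLocalRing.ResidueField O) =
      p * Nat.card {x : IsLocalRing.ResidueField O |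
        ∃ s : IsLocalRing.ResidueField O, s ^ p + IsLocalRing.residue O c * s = x} := by
  classical
  haveI := Fact.mk hp
  have hp2 : 2 ≤ p := hp.two_le
  have hπ0 : π ≠ 0 := hπ.ne_zero
  have he'pos : 0 < e' := by rw [he']; exact Nat.mul_pos (by omega) hn
  have hem : e' + n = m := by
    have h1 : n ≤ p * n := Nat.le_mul_of_pos_left n hp.pos
    rw [he', hm, Nat.sub_one_mul]
    omega
  -- Part 1
  have part1 : ∀ s : O, π ^ (m + 1) ∣ ((1 + s * π ^ n) ^ p - (1 + (s ^ p + c * s) * π ^ m)) := by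
    intro s
    have hx : (1 + s * π ^ n) ^ p
        = ∑ k ∈ range (p + 1), (s * π ^ n) ^ k * (p.choose k : O) := by
      rw [add_comm, add_pow]; simp
    have h1 : (s * π ^ n) ^ 1 * (p.choose 1 : O) = c * s * π ^ m := by
      rw [Nat.choose_one_right, pow_one, hpc, ← hem, pow_add]; ring
    have hpterm : (s * π ^ n) ^ p * (p.choose p : O) = s ^ p * π ^ m := by
      rw [Nat.choose_self, mul_pow, ← pow_mul, hm]; push_cast; ring
    have hsum : (1 + s * π ^ n) ^ p - (1 + (s ^ p + c * s) * π ^ m)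
        = ∑ k ∈ Ico 2 p, (s * π ^ n) ^ k * (p.choose k : O) := by
      rw [hx, sum_range_succ, range_eq_Ico,
        sum_eq_sum_Ico_succ_bot (by omega : 0 < p),
        sum_eq_sum_Ico_succ_bot (by omega : 1 < p), h1, hpterm]
      push_cast [Nat.choose_zero_right]
      ring
    rw [hsum]
    refine dvd_sum fun k hk => ?_
    obtain ⟨hk2, hkp⟩ := mem_Ico.mp hk
    obtain ⟨b, hb⟩ := hp.dvd_choose_self (by omega) hkp
    have hrw : (s * π ^ n) ^ k * (p.choose k : O)
        = (s ^ k * c * (b : O)) * π ^ (n * k + e') := by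
      rw [hb]; push_cast [hpc]; rw [mul_pow, ← pow_mul, pow_add]; ring
    rw [hrw]
    refine Dvd.dvd.mul_left (pow_dvd_pow π ?_) _
    have h2 : n * 2 ≤ n * k := Nat.mul_le_mul_left n hk2
    omega
  refine ⟨part1, ?_⟩
  -- basic facts on ζ
  have hζ0 : ζ ≠ 0 := by
    rintro rfl
    rw [zero_pow hp.pos.ne'] at hζ
    exact one_ne_zero hζ.symm
  have horder : orderOf ζ = p := orderOf_eq_prime hζ hζ1
  have hprim : IsPrimitiveRoot ζ p :=
    ⟨hζ, fun l hl => horder ▸ orderOf_dvd_of_pow_eq_one hl⟩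
  -- the p-th roots of unity are exactly the powers of ζ
  have haux : ∀ i j : ℕ, j < p → i ≤ j → ζ ^ i = ζ ^ j → i = j := by
    intro i j hj hij heq
    have h1 : ζ ^ i * ζ ^ (j - i) = ζ ^ i * 1 := by
      rw [mul_one, ← pow_add, Nat.add_sub_cancel' hij]
      exact heq.symm
    have h2 : ζ ^ (j - i) = 1 := mul_left_cancel₀ (pow_ne_zero _ hζ0) h1
    have h3 := orderOf_dvd_of_pow_eq_one h2
    rw [horder] at h3
    have h4 : j - i = 0 := Nat.eq_zero_of_dvd_of_lt h3 (by omega)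
    omega
  have hinj : Set.InjOn (fun i => ζ ^ i) (range p : Finset ℕ) := by
    intro i hi j hj hij
    simp only [Finset.coe_range, Set.mem_Iio] at hi hj
    rcases le_total i j with h | h
    · exact haux i j hj h hij
    · exact (haux j i hi h hij.symm).symm
  have hS : nthRootsFinset p (1 : O) = (range p).image (ζ ^ ·) := by
    symm
    apply Finset.eq_of_subset_of_card_le
    · intro x hx
      simp only [mem_image, mem_range] at hx
      obtain ⟨i, hi, rfl⟩ := hx
      rw [Polynomial.mem_nthRootsFinset hp.pos, ← pow_mul, mul_comm, pow_mul, hζ, one_pow]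
    · rw [hprim.card_nthRootsFinset, Finset.card_image_of_injOn hinj, Finset.card_range]
  -- p = ∏_{μ ≠ 1 root} (1 - μ)
  have hone : (1 : O) ∈ nthRootsFinset p (1 : O) := Polynomial.one_mem_nthRootsFinset hp.pos
  have hX1 : (X : O[X]) - 1 ≠ 0 := by
    rw [← map_one (C : O →+* O[X])]
    exact Polynomial.X_sub_C_ne_zero (1 : O)
  have hgeom : (∑ i ∈ range p, (X : O[X]) ^ i)
      = ∏ μ ∈ (nthRootsFinset p (1 : O)).erase 1, (X - C μ) := by
    apply mul_right_cancel₀ hX1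
    rw [geom_sum_mul, X_pow_sub_one_eq_prod hp.pos hprim,
      ← Finset.mul_prod_erase _ _ hone, map_one, mul_comm]
  have hprod : (p : O) = ∏ μ ∈ (nthRootsFinset p (1 : O)).erase 1, (1 - μ) := by
    have h := congrArg (Polynomial.eval 1) hgeom
    simpa [Polynomial.eval_prod, Polynomial.eval_finset_sum] using h
  -- each factor is associated to ζ - 1
  have hdvd2 : ∀ i : ℕ, 0 < i → i < p → Associated (ζ - 1) (1 - ζ ^ i) := by
    intro i hi0 hip
    have e : (1 : O) - ζ ^ i = -(ζ ^ i - 1) := by ring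
    have h1 : ζ - 1 ∣ ζ ^ i - 1 := by
      simpa using sub_dvd_pow_sub_pow ζ 1 i
    have h2 : ζ ^ i - 1 ∣ ζ - 1 := by
      haveI : NeZero p := ⟨hp.pos.ne'⟩
      have hz : ((i : ZMod p)) ≠ 0 := by
        rw [Ne, ZMod.natCast_eq_zero_iff]
        exact Nat.not_dvd_of_pos_of_lt hi0 hip
      have hf : ((i ^ (p - 1) : ℕ) : ZMod p) = ((1 : ℕ) : ZMod p) := by
        push_cast
        exact ZMod.pow_card_sub_one_eq_one hz
      have hmod : p ∣ i ^ (p - 1) - 1 :=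
        (Nat.modEq_iff_dvd' (Nat.one_le_iff_ne_zero.mpr (pow_ne_zero _ hi0.ne'))).mp
          ((ZMod.natCast_eq_natCast_iff _ _ _).mp hf.symm)
      obtain ⟨b, hb⟩ := hmod
      have hexp : i * i ^ (p - 2) = p * b + 1 := by
        have h5 : i ^ (p - 1) = i * i ^ (p - 2) := by
          have : p - 1 = (p - 2) + 1 := by omega
          rw [this, pow_succ']
        have h6 : 1 ≤ i ^ (p - 1) := Nat.one_le_iff_ne_zero.mpr (pow_ne_zero _ hi0.ne')
        omega
      have hzeta : (ζ ^ i) ^ (i ^ (p - 2)) = ζ := by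
        rw [← pow_mul, hexp, pow_add, pow_mul, hζ, one_pow, pow_one, one_mul]
      calc ζ ^ i - 1 ∣ (ζ ^ i) ^ (i ^ (p - 2)) - 1 := by
            simpa using sub_dvd_pow_sub_pow (ζ ^ i) 1 (i ^ (p - 2))
        _ = ζ - 1 := by rw [hzeta]
    refine associated_of_dvd_dvd ?_ ?_
    · rw [e]; exact dvd_neg.mpr h1
    · rw [e]; exact neg_dvd.mpr h2
  -- p is associated to (ζ-1)^(p-1)
  have hassoc : Associated ((ζ - 1) ^ (p - 1)) (p : O) := by
    have h1 : Associated (∏ _μ ∈ (nthRootsFinset p (1 : O)).erase 1, (ζ - 1))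
        (∏ μ ∈ (nthRootsFinset p (1 : O)).erase 1, (1 - μ)) := by
      refine Associated.prod _ _ _ fun μ hμ => ?_
      obtain ⟨hμ1, hμS⟩ := Finset.mem_erase.mp hμ
      rw [hS, mem_image] at hμS
      obtain ⟨i, hi, rfl⟩ := hμS
      rw [mem_range] at hi
      have hi0 : 0 < i := by
        rcases Nat.eq_zero_or_pos i with h | h
        · exfalso; apply hμ1; rw [h, pow_zero]
        · exact h
      exact hdvd2 i hi0 hi
    rw [Finset.prod_const, Finset.card_erase_of_mem hone,
      hprim.card_nthRootsFinset] at h1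
    rw [← hprod] at h1
    exact h1
  -- write ζ - 1 = u π^k and show k = n
  have hζ1' : ζ - 1 ≠ 0 := sub_ne_zero.mpr hζ1
  obtain ⟨k, u, hku⟩ := IsDiscreteValuationRing.eq_unit_mul_pow_irreducible hζ1' hπ
  have hk : k = n := by
    have ha : Associated (π ^ (k * (p - 1))) ((ζ - 1) ^ (p - 1)) := by
      refine ⟨u ^ (p - 1), ?_⟩
      rw [hku, mul_pow, ← pow_mul, mul_comm (π ^ (k * (p - 1)))]
      push_cast
      ring
    have hb : Associated (π ^ e') (p : O) := by
      refine ⟨hc.unit, ?_⟩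
      rw [IsUnit.unit_spec, mul_comm, hpc]
    have key : Associated (π ^ (k * (p - 1))) (π ^ e') :=
      (ha.trans hassoc).trans hb.symm
    obtain ⟨w, hw⟩ := key
    have heq : k * (p - 1) = e' := by
      refine IsDiscreteValuationRing.unit_mul_pow_congr_pow hπ hπ w 1 _ _ ?_
      rw [Units.val_one, one_mul, mul_comm (w : O), hw]
    rw [he'] at heq
    have hp1 : 0 < p - 1 := by omega
    exact Nat.eq_of_mul_eq_mul_right hp1 (by rw [heq, mul_comm])
  rw [hk] at hku
  have hζeq : ζ = 1 + (u : O) * π ^ n := by linear_combination hku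
  -- residue of u is a nonzero root of X^p + c̄ X
  have hmax : IsLocalRing.maximalIdeal O = Ideal.span {π} := hπ.maximalIdeal_eq
  have hres0 : ∀ y : O, π ∣ y → residue O y = 0 := by
    intro y hy
    rw [IsLocalRing.residue_eq_zero_iff, hmax]
    exact Ideal.mem_span_singleton.mpr hy
  have hroot : residue O (u : O) ^ p + residue O c * residue O (u : O) = 0 := by
    have h := part1 (u : O)
    rw [← hζeq, hζ] at h
    have h2 : π ^ (m + 1) ∣ (((u : O) ^ p + c * u) * π ^ m) := by
      have : (1 : O) - (1 + ((u : O) ^ p + c * u) * π ^ m)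
          = -(((u : O) ^ p + c * u) * π ^ m) := by ring
      rw [this, dvd_neg] at h
      exact h
    have h3 : π ∣ ((u : O) ^ p + c * u) := by
      have h4 : π ^ m * π ∣ π ^ m * ((u : O) ^ p + c * u) := by
        rw [pow_succ] at h2
        calc π ^ m * π ∣ ((u : O) ^ p + c * u) * π ^ m := h2
          _ = π ^ m * ((u : O) ^ p + c * u) := mul_comm _ _
      exact (mul_dvd_mul_iff_left (pow_ne_zero m hπ0)).mp h4
    have h5 := hres0 _ h3
    rw [map_add, map_pow, map_mul] at h5
    exact h5
  have hu0 : residue O (u : O) ≠ 0 := ((u.isUnit).map (residue O)).ne_zero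
  -- characteristic p
  have hπres : residue O π = 0 := hres0 π dvd_rfl
  have hpl : ((p : ℕ) : IsLocalRing.ResidueField O) = 0 := by
    have h := congrArg (residue O) hpc
    rw [map_natCast, map_mul, map_pow, hπres, zero_pow he'pos.ne', mul_zero] at h
    exact h
  haveI : CharP (IsLocalRing.ResidueField O) p :=
    (CharP.charP_iff_prime_eq_zero hp).mpr hpl
  have hcne : residue O c ≠ 0 := (hc.map (residue O)).ne_zero
  -- cardinality of the fixed-point set {x | x^p = x} is p
  have hF : Nat.card {x : IsLocalRing.ResidueField O | x ^ p = x} = p := by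
    set F : Set (IsLocalRing.ResidueField O) := {x | x ^ p = x} with hFdef
    have hle : Nat.card F ≤ p := by
      classical
      set q : (IsLocalRing.ResidueField O)[X] := X ^ p - X with hq
      have hq0 : q ≠ 0 := by
        intro h
        have := congrArg (fun r => Polynomial.coeff r p) h
        simp only [hq, Polynomial.coeff_sub, Polynomial.coeff_X_pow, if_pos rfl,
          Polynomial.coeff_X, Polynomial.coeff_zero] at this
        rw [if_neg (by omega : 1 ≠ p)] at this
        norm_num at this
      have hsub : F ⊆ (q.roots.toFinset : Set (IsLocalRing.ResidueField O)) := by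
        intro x hx
        simp only [Multiset.mem_toFinset, Finset.coe_sort_coe, Finset.mem_coe]
        rw [Polynomial.mem_roots hq0]
        simp only [hq, Polynomial.IsRoot, Polynomial.eval_sub, Polynomial.eval_pow,
          Polynomial.eval_X]
        rw [hx]
        ring
      have hdeg : q.roots.toFinset.card ≤ p := by
        refine le_trans (Multiset.toFinset_card_le _) ?_
        refine le_trans (Polynomial.card_roots' q) ?_
        refine le_trans (Polynomial.natDegree_sub_le _ _) ?_
        simp only [Polynomial.natDegree_X_pow, Polynomial.natDegree_X]
        omega
      calc Nat.card F = F.ncard := Nat.card_coe_set_eq F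
        _ ≤ (q.roots.toFinset : Set (IsLocalRing.ResidueField O)).ncard :=
            Set.ncard_le_ncard hsub (Finset.finite_toSet _)
        _ = q.roots.toFinset.card := Set.ncard_coe_finset _
        _ ≤ p := hdeg
    have hge : p ≤ Nat.card F := by
      have f : ZMod p →+* IsLocalRing.ResidueField O :=
        ZMod.castHom dvd_rfl (IsLocalRing.ResidueField O)
      have hg : ∀ a : ZMod p, (f a) ^ p = f a := by
        intro a
        rw [← map_pow, ZMod.pow_card]
      have hfi : Function.Injective fun a : ZMod p => (⟨f a, hg a⟩ : F) := by
        intro a b hab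
        exact f.injective (congrArg Subtype.val hab)
      calc p = Nat.card (ZMod p) := by simp [Nat.card_eq_fintype_card]
        _ ≤ Nat.card F := Nat.card_le_card_of_injective _ hfi
    omega
  -- kernel set has the same cardinality as F
  set s₀ : IsLocalRing.ResidueField O := residue O (u : O) with hs₀
  have hKF : Nat.card {s : IsLocalRing.ResidueField O |
      s ^ p + IsLocalRing.residue O c * s = 0} = p := by
    refine Eq.trans (Nat.card_congr ?_) hF
    have hmem : ∀ x : IsLocalRing.ResidueField O, x ^ p = x →
        (x * s₀) ^ p + IsLocalRing.residue O c * (x * s₀) = 0 := by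
      intro x hx
      rw [mul_pow, hx]
      linear_combination x * hroot
    refine (Equiv.ofBijective (fun x : {x : IsLocalRing.ResidueField O | x ^ p = x} =>
      (⟨x.1 * s₀, hmem x.1 x.2⟩ : {s : IsLocalRing.ResidueField O |
        s ^ p + IsLocalRing.residue O c * s = 0})) ⟨?_, ?_⟩).symm
    · intro a b hab
      have h := congrArg Subtype.val hab
      simp only at h
      exact Subtype.ext (mul_right_cancel₀ hu0 h)
    · rintro ⟨t, ht⟩
      simp only [Set.mem_setOf_eq] at ht
      have hsp : s₀ ^ p = -(residue O c * s₀) := by linear_combination hroot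
      have htp : t ^ p = -(residue O c * t) := by linear_combination ht
      refine ⟨⟨t * s₀⁻¹, ?_⟩, ?_⟩
      · simp only [Set.mem_setOf_eq]
        rw [mul_pow, htp, inv_pow, hsp]
        field_simp
      · apply Subtype.ext
        simp only
        field_simp
  refine ⟨hKF, ?_⟩
  -- the additive homomorphism s ↦ s^p + c̄ s and the first isomorphism theorem
  let φ : IsLocalRing.ResidueField O →+ IsLocalRing.ResidueField O :=
    { toFun := fun s => s ^ p + residue O c * s
      map_zero' := by simp [zero_pow hp.pos.ne']
      map_add' := fun a b => by
        rw [add_pow_char]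
        ring }
  have hker : (φ.ker : Set (IsLocalRing.ResidueField O))
      = {s : IsLocalRing.ResidueField O | s ^ p + IsLocalRing.residue O c * s = 0} := by
    ext s
    simp [φ, AddMonoidHom.mem_ker]
  have hrange : (φ.range : Set (IsLocalRing.ResidueField O))
      = {x : IsLocalRing.ResidueField O |
          ∃ s : IsLocalRing.ResidueField O, s ^ p + IsLocalRing.residue O c * s = x} := by
    ext x
    simp [φ, AddMonoidHom.mem_range]
  have hcard := AddSubgroup.card_eq_card_quotient_mul_card_addSubgroup φ.ker
  have hqr : Nat.card (IsLocalRing.ResidueField O ⧸ φ.ker) = Nat.card φ.range :=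
    Nat.card_congr (QuotientAddGroup.quotientKerEquivRange φ).toEquiv
  have hkercard : Nat.card φ.ker = p := by
    rw [← hKF]
    exact Nat.card_congr (Equiv.setCongr hker)
  have hrangecard : Nat.card φ.range = Nat.card {x : IsLocalRing.ResidueField O |
      ∃ s : IsLocalRing.ResidueField O, s ^ p + IsLocalRing.residue O c * s = x} :=
    Nat.card_congr (Equiv.setCongr hrange)
  rw [hcard, hqr, hkercard, hrangecard, mul_comm]
end

section
/- The Artin–Hasse exponential E_p(x) = exp(Σ_{n≥0} x^{p^n}/p^n) has p-integral coefficients: E_p(x) ∈ Z_p⟦x⟧. Moreover E_p(x) ≡ 1 + x (mod x^2). -/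
open PowerSeries

namespace AH

open Finset

attribute [local instance 0] Classical.propDecidable

lemma coeff_derivativeFun' (f : PowerSeries ℚ) (n : ℕ) :
    coeff n (derivativeFun f) = coeff (n + 1) f * (n + 1) := coeff_derivative f n

lemma indicator_eq_sum (g : ℕ → ℕ) (hginj : Function.Injective g) (hge : ∀ n, n < g n)
    (k i : ℕ) (hi : i ≤ k) :
    (if ∃ n, i + 1 = g n then (1:ℚ) else 0) = ∑ n ∈ range (k+1), if i + 1 = g n then (1:ℚ) else 0 := by
  by_cases hx : ∃ n, i + 1 = g n
  · obtain ⟨n, hn⟩ := hx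
    rw [if_pos ⟨n, hn⟩, Finset.sum_eq_single n]
    · rw [if_pos hn]
    · intro m _ hm
      rw [if_neg]
      intro hc
      exact hm (hginj (hc ▸ hn))
    · intro hnmem
      exfalso
      exact hnmem (mem_range.2 (by have := hge n; omega))
  · rw [if_neg hx, eq_comm]
    apply Finset.sum_eq_zero
    intro m _
    rw [if_neg (fun hc => hx ⟨m, hc⟩)]

lemma master (g : ℕ → ℕ) (hginj : Function.Injective g) (hge : ∀ n, n < g n)
    (h : ℕ → ℚ) (k : ℕ) :
    ∑ x ∈ Finset.HasAntidiagonal.antidiagonal k, (if ∃ n, x.1 + 1 = g n then (1:ℚ) else 0) * h x.2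
      = ∑ n ∈ range (k+1), if g n ≤ k + 1 then h (k + 1 - g n) else 0 := by
  rw [Finset.Nat.sum_antidiagonal_eq_sum_range_succ
    (fun i j => (if ∃ n, i + 1 = g n then (1:ℚ) else 0) * h j) k]
  calc ∑ i ∈ range (k+1), (if ∃ n, i + 1 = g n then (1:ℚ) else 0) * h (k - i)
      = ∑ i ∈ range (k+1), ∑ n ∈ range (k+1), (if i + 1 = g n then (1:ℚ) else 0) * h (k - i) := by
        refine sum_congr rfl fun i hi => ?_
        rw [← Finset.sum_mul, ← indicator_eq_sum g hginj hge k i (by have := mem_range.1 hi; omega)]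
    _ = ∑ n ∈ range (k+1), ∑ i ∈ range (k+1), (if i + 1 = g n then (1:ℚ) else 0) * h (k - i) :=
        Finset.sum_comm
    _ = ∑ n ∈ range (k+1), if g n ≤ k + 1 then h (k + 1 - g n) else 0 := by
        refine sum_congr rfl fun n hn => ?_
        have hg1 : 1 ≤ g n := by have := hge n; omega
        have h1 : ∀ i : ℕ, ((if i + 1 = g n then (1:ℚ) else 0) * h (k - i))
            = if i = g n - 1 then h (k - i) else 0 := by
          intro i
          by_cases hc : i + 1 = g n
          · rw [if_pos hc, if_pos (by omega), one_mul]
          · rw [if_neg hc, if_neg (by omega), zero_mul]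
        simp only [h1]
        rw [Finset.sum_ite_eq' (range (k+1)) (g n - 1) (fun i => h (k - i))]
        by_cases hle : g n ≤ k + 1
        · rw [if_pos (mem_range.2 (by omega)), if_pos hle]
          congr 1
          omega
        · rw [if_neg (by rw [mem_range]; omega), if_neg hle]

noncomputable def dd (p i : ℕ) : ℚ := if ∃ n : ℕ, i + 1 = p ^ n then 1 else 0

variable {p : ℕ} [hp : Fact p.Prime]

lemma hginj : Function.Injective (fun n => p ^ n) :=
  fun _ _ h => Nat.pow_right_injective hp.1.two_le h

lemma hge : ∀ n, n < p ^ n := fun n => Nat.lt_pow_self hp.1.one_lt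

lemma hginj' : Function.Injective (fun n => p ^ (n+1)) :=
  fun a b h => by simpa using Nat.pow_right_injective hp.1.two_le (h : p^(a+1) = p^(b+1))

lemma hge' : ∀ n, n < p ^ (n+1) := fun n =>
  lt_of_lt_of_le (hge n) (Nat.pow_le_pow_right hp.1.pos (by omega))

lemma derivL_eq (L : PowerSeries ℚ)
    (hL1 : ∀ n : ℕ, coeff (p ^ n) L = 1 / (p ^ n : ℚ))
    (hL2 : ∀ k : ℕ, (¬ ∃ n : ℕ, k = p ^ n) → coeff k L = 0) :
    derivativeFun L = PowerSeries.mk (dd p) := by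
  ext i
  rw [coeff_derivativeFun', coeff_mk, dd]
  by_cases hx : ∃ n : ℕ, i + 1 = p ^ n
  · obtain ⟨n, hn⟩ := hx
    rw [if_pos ⟨n, hn⟩, hn, hL1 n]
    have hpn : ((p : ℚ)) ^ n ≠ 0 := pow_ne_zero n (Nat.cast_ne_zero.2 hp.1.pos.ne')
    have hcast : ((i:ℚ) + 1) = (p:ℚ)^n := by exact_mod_cast congrArg (Nat.cast : ℕ → ℚ) hn
    rw [hcast, one_div, inv_mul_cancel₀ hpn]
  · rw [if_neg hx, hL2 (i+1) (by simpa [eq_comm] using hx), zero_mul]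

/-- recursion for coefficients of a series satisfying `f' = L' f`. -/
lemma recursion (E : PowerSeries ℚ) (hE : derivativeFun E = PowerSeries.mk (dd p) * E)
    (K : ℕ) (hK : 1 ≤ K) :
    (K : ℚ) * coeff K E
      = ∑ n ∈ range K, if p ^ n ≤ K then coeff (K - p^n) E else 0 := by
  obtain ⟨k, rfl⟩ : ∃ k, K = k + 1 := ⟨K - 1, by omega⟩
  have h := congrArg (coeff k) hE
  rw [coeff_derivativeFun', coeff_mul] at h
  simp only [coeff_mk] at h
  rw [mul_comm] at h
  push_cast
  rw [h]
  simp only [dd]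
  exact master (fun n => p ^ n) hginj hge (fun j => coeff j E) k

lemma mk_dd_sub_one :
    (PowerSeries.mk (dd p) - 1 : PowerSeries ℚ)
      = PowerSeries.mk (fun i => if ∃ n : ℕ, i + 1 = p ^ (n+1) then (1:ℚ) else 0) := by
  ext i
  rw [map_sub, coeff_mk, coeff_mk, coeff_one, dd]
  rcases Nat.eq_zero_or_pos i with hi | hi
  · subst hi
    have h1 : (∃ n : ℕ, 0 + 1 = p ^ n) := ⟨0, by simp⟩
    have h2 : ¬ (∃ n : ℕ, 0 + 1 = p ^ (n+1)) := by
      rintro ⟨n, hn⟩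
      have h3 : p ≤ p ^ (n+1) := Nat.le_self_pow (by omega) p
      have h4 := hp.1.two_le
      omega
    simp [h1, h2]
  · rw [if_neg (show ¬ i = 0 by omega), sub_zero]
    congr 1
    apply propext
    constructor
    · rintro ⟨n, hn⟩
      rcases n with _ | m
      · simp at hn; omega
      · exact ⟨m, hn⟩
    · rintro ⟨n, hn⟩
      exact ⟨n + 1, hn⟩

noncomputable def bb (a : ℕ → ℚ) (p : ℕ) (i : ℕ) : ℚ := if p ∣ i then a (i / p) else 0

noncomputable def xx (p j : ℕ) : ℚ := (p:ℚ)^j / (j.factorial : ℚ)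

lemma deriv_B (a : ℕ → ℚ)
    (ha : ∀ K : ℕ, 1 ≤ K → (K : ℚ) * a K = ∑ n ∈ range K, if p ^ n ≤ K then a (K - p^n) else 0) :
    derivativeFun (PowerSeries.mk (bb a p))
      = C (p:ℚ) * ((PowerSeries.mk (dd p) - 1) * PowerSeries.mk (bb a p)) := by
  ext k
  rw [coeff_derivativeFun', coeff_mk, coeff_C_mul, mk_dd_sub_one, coeff_mul]
  simp only [coeff_mk]
  rw [master (fun n => p ^ (n+1)) hginj' hge' (bb a p) k]
  by_cases hdvd : p ∣ (k+1)
  · obtain ⟨M, hM⟩ := hdvd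
    have hp2 := hp.1.two_le
    have hM1 : 1 ≤ M := by
      rcases Nat.eq_zero_or_pos M with h | h
      · subst h; simp at hM
      · exact h
    have hbbK : bb a p (k+1) = a M := by
      rw [bb, if_pos ⟨M, hM⟩, hM, Nat.mul_div_cancel_left M hp.1.pos]
    have hterm : ∀ n : ℕ, (if p^(n+1) ≤ k+1 then bb a p (k+1 - p^(n+1)) else 0)
        = (if p^n ≤ M then a (M - p^n) else 0) := by
      intro n
      have hc : (p^(n+1) ≤ k+1) ↔ (p^n ≤ M) := by
        rw [hM, pow_succ']
        exact ⟨fun h => Nat.le_of_mul_le_mul_left h hp.1.pos,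
          fun h => Nat.mul_le_mul_left p h⟩
      by_cases h : p^n ≤ M
      · rw [if_pos (hc.2 h), if_pos h]
        have hsub : k+1 - p^(n+1) = p * (M - p^n) := by
          rw [hM, pow_succ', Nat.mul_sub]
        rw [hsub, bb, if_pos (Dvd.intro _ rfl), Nat.mul_div_cancel_left _ hp.1.pos]
      · rw [if_neg (fun hcc => h (hc.1 hcc)), if_neg h]
    rw [Finset.sum_congr rfl (fun n _ => hterm n)]
    have hsub : range M ⊆ range (k+1) := by
      apply Finset.range_subset_range.2
      have : M ≤ p * M := Nat.le_mul_of_pos_left M hp.1.pos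
      omega
    rw [← Finset.sum_subset hsub (fun n _ hn => ?_)]
    · rw [← ha M hM1, hbbK]
      have : ((k:ℚ) + 1) = (p : ℚ) * (M:ℚ) := by
        have : ((k+1 : ℕ) : ℚ) = ((p * M : ℕ) : ℚ) := by exact_mod_cast congrArg (Nat.cast : ℕ → ℚ) hM
        push_cast at this
        linarith
      rw [this]
      ring
    · rw [if_neg]
      intro hle
      have h1 : M ≤ n := by simpa using hn
      have h2 := hge (p := p) n
      omega
  · have hbbK : bb a p (k+1) = 0 := by rw [bb, if_neg hdvd]
    rw [hbbK, zero_mul]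
    rw [Finset.sum_eq_zero, mul_zero]
    intro n _
    by_cases hle : p^(n+1) ≤ k+1
    · rw [if_pos hle, bb, if_neg]
      intro hd
      have hd2 : p ∣ p^(n+1) := dvd_pow_self p (Nat.succ_ne_zero n)
      exact hdvd (by
        have h3 := Nat.dvd_add hd hd2
        rwa [Nat.sub_add_cancel hle] at h3)
    · rw [if_neg hle]

lemma deriv_X : derivativeFun (PowerSeries.mk (xx p)) = C (p:ℚ) * PowerSeries.mk (xx p) := by
  ext j
  rw [coeff_derivativeFun', coeff_mk, coeff_C_mul, coeff_mk, xx, xx, Nat.factorial_succ]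
  have h1 : (j.factorial : ℚ) ≠ 0 := Nat.cast_ne_zero.2 (Nat.factorial_ne_zero j)
  have h2 : ((j:ℚ) + 1) ≠ 0 := by positivity
  push_cast
  field_simp
  ring

lemma deriv_pow (E D : PowerSeries ℚ) (hE : derivativeFun E = D * E) (m : ℕ) :
    derivativeFun (E ^ m) = (m : PowerSeries ℚ) * (D * E ^ m) := by
  induction m with
  | zero => simp [derivativeFun_one]
  | succ m ih =>
      rw [pow_succ, derivativeFun_mul, hE, ih]
      simp only [smul_eq_mul]
      push_cast
      ring

lemma ode_unique (M F G : PowerSeries ℚ) (hF : derivativeFun F = M * F)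
    (hG : derivativeFun G = M * G) (h0 : constantCoeff F = constantCoeff G) : F = G := by
  ext k
  induction k using Nat.strong_induction_on with
  | _ k ih =>
    match k with
    | 0 => simpa [coeff_zero_eq_constantCoeff] using h0
    | (n+1) =>
      have hFc := congrArg (coeff n) hF
      have hGc := congrArg (coeff n) hG
      rw [coeff_derivativeFun', coeff_mul] at hFc hGc
      have hsum : ∑ x ∈ Finset.HasAntidiagonal.antidiagonal n, coeff x.1 M * coeff x.2 F
          = ∑ x ∈ Finset.HasAntidiagonal.antidiagonal n, coeff x.1 M * coeff x.2 G := by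
        refine sum_congr rfl fun x hx => ?_
        have hx2 : x.2 ≤ n := by
          have := Finset.HasAntidiagonal.mem_antidiagonal.1 hx
          omega
        rw [ih x.2 (by omega)]
      have hkey := hFc.trans (hsum.trans hGc.symm)
      have hne : ((n:ℚ) + 1) ≠ 0 := by positivity
      exact mul_right_cancel₀ hne hkey

lemma stage2 (E : PowerSeries ℚ) (hE : derivativeFun E = PowerSeries.mk (dd p) * E)
    (hE0 : constantCoeff E = 1) :
    E ^ p = PowerSeries.mk (bb (fun i => coeff i E) p) * PowerSeries.mk (xx p) := by
  have hCp : (C ((p:ℕ):ℚ)) = ((p:ℕ) : PowerSeries ℚ) := map_natCast (C (R := ℚ)) p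
  apply ode_unique ((p : PowerSeries ℚ) * PowerSeries.mk (dd p))
  · exact (deriv_pow E _ hE p).trans (mul_assoc _ _ _).symm
  · rw [derivativeFun_mul, deriv_B (fun i => coeff i E) (recursion E hE), deriv_X]
    simp only [smul_eq_mul, hCp]
    ring
  · rw [map_pow, hE0, one_pow, map_mul]
    have hb : constantCoeff (PowerSeries.mk (bb (fun i => coeff i E) p)) = 1 := by
      rw [← coeff_zero_eq_constantCoeff, coeff_mk, bb, if_pos (dvd_zero p), Nat.zero_div,
        coeff_zero_eq_constantCoeff, hE0]
    have hx : constantCoeff (PowerSeries.mk (xx p)) = 1 := by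
      rw [← coeff_zero_eq_constantCoeff, coeff_mk, xx]
      simp
    rw [hb, hx, one_mul]

lemma digit_sum_pos (b : ℕ) (hb : 1 < b) : ∀ j, 0 < j → 0 < (Nat.digits b j).sum := by
  intro j
  induction j using Nat.strong_induction_on with
  | _ j ih =>
    intro hj
    rw [Nat.digits_def' hb hj]
    simp only [List.sum_cons]
    rcases Nat.eq_zero_or_pos (j % b) with h | h
    · have hd : b ∣ j := Nat.dvd_of_mod_eq_zero h
      have hj2 : 0 < j / b := Nat.div_pos (Nat.le_of_dvd hj hd) (by omega)
      have := ih (j / b) (Nat.div_lt_self hj hb) hj2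
      omega
    · omega

lemma valNat_factorial_le (j : ℕ) (hj : 1 ≤ j) : padicValNat p (Nat.factorial j) ≤ j - 1 := by
  have h := sub_one_mul_padicValNat_factorial (p := p) j
  have hs := digit_sum_pos p hp.1.one_lt j hj
  have h2 : padicValNat p (Nat.factorial j) ≤ (p - 1) * padicValNat p (Nat.factorial j) :=
    Nat.le_mul_of_pos_left _ (by have := hp.1.two_le; omega)
  omega

lemma norm_xx_le (j : ℕ) (hj : 1 ≤ j) : ‖((xx p j : ℚ) : ℚ_[p])‖ ≤ (p:ℝ)⁻¹ := by
  have hp0 : (0:ℚ) < (p:ℚ) := by exact_mod_cast hp.1.pos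
  have hfac : (j.factorial : ℚ) ≠ 0 := Nat.cast_ne_zero.2 (Nat.factorial_ne_zero j)
  have hq : xx p j ≠ 0 := div_ne_zero (pow_ne_zero _ hp0.ne') hfac
  rw [Padic.eq_padicNorm, padicNorm.eq_zpow_of_nonzero hq]
  have hv : padicValRat p (xx p j) = (j : ℤ) - (padicValNat p (j.factorial) : ℤ) := by
    rw [xx, padicValRat.div (pow_ne_zero _ hp0.ne') hfac]
    congr 1
    · have h1 : ((p:ℚ))^j = ((p^j : ℕ) : ℚ) := by push_cast; ring
      rw [h1, padicValRat.of_nat, padicValNat.prime_pow]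
    · rw [show (j.factorial : ℚ) = ((j.factorial : ℕ) : ℚ) from rfl, padicValRat.of_nat]
  have hvle : 1 ≤ padicValRat p (xx p j) := by
    rw [hv]
    have := valNat_factorial_le (p := p) j hj
    omega
  have hp1 : (1:ℚ) ≤ (p:ℚ) := by exact_mod_cast hp.1.one_le
  have hmono : ((p:ℚ)) ^ (-padicValRat p (xx p j)) ≤ ((p:ℚ)) ^ (-1 : ℤ) := by
    apply zpow_le_zpow_right₀ hp1
    omega
  calc ((((p:ℚ)) ^ (-padicValRat p (xx p j)) : ℚ) : ℝ)
      ≤ ((((p:ℚ)) ^ (-1 : ℤ) : ℚ) : ℝ) := by exact_mod_cast hmono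
    _ = (p:ℝ)⁻¹ := by push_cast; simp

open IsUltrametricDist in
lemma integral (a : ℕ → ℚ) (ha0 : a 0 = 1)
    (hid : (PowerSeries.mk a) ^ p = PowerSeries.mk (bb a p) * PowerSeries.mk (xx p)) :
    ∀ k, ‖((a k : ℚ) : ℚ_[p])‖ ≤ 1 := by
  intro k
  induction k using Nat.strong_induction_on with
  | _ k IH =>
    rcases Nat.eq_zero_or_pos k with rfl | hk
    · simp [ha0]
    have hp1 : 1 < p := hp.1.one_lt
    set ρ : ℚ →+* ℚ_[p] := Rat.castHom ℚ_[p] with hρ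
    set A : ℕ → ℚ_[p] := fun j => ((a j : ℚ) : ℚ_[p]) with hA
    have hAnorm : ∀ j, j < k → ‖A j‖ ≤ 1 := fun j hj => IH j hj
    have hA0 : A 0 = 1 := by rw [hA]; simp [ha0]
    set Eh : PowerSeries ℚ_[p] := PowerSeries.map ρ (PowerSeries.mk a) with hEh
    have hEhc : ∀ j, coeff j Eh = A j := by
      intro j; rw [hEh, coeff_map, coeff_mk]; rfl
    have hid2 : Eh ^ p
        = PowerSeries.map ρ (PowerSeries.mk (bb a p)) * PowerSeries.map ρ (PowerSeries.mk (xx p)) := by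
      rw [hEh, ← map_pow, hid, map_mul]
    -- ℤ_p lifts
    set z : ℕ → ℤ_[p] := fun j => if h : j < k then ⟨A j, hAnorm j h⟩ else 0 with hz
    have hzcoe : ∀ j, j < k → ((z j : ℚ_[p])) = A j := by
      intro j hj; rw [hz]; simp [hj]
    set Q : Polynomial ℤ_[p] := ∑ j ∈ range k, Polynomial.C (z j) * Polynomial.X ^ j with hQ
    have hQcoeff : ∀ m, Q.coeff m = if m < k then z m else 0 := by
      intro m
      rw [hQ, Polynomial.finset_sum_coeff]
      simp only [Polynomial.coeff_C_mul, Polynomial.coeff_X_pow, mul_ite, mul_one, mul_zero]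
      rw [Finset.sum_ite_eq (range k) m z]
      by_cases h : m < k
      · rw [if_pos (mem_range.2 h), if_pos h]
      · rw [if_neg (fun hc => h (mem_range.1 hc)), if_neg h]
    set φ : ℤ_[p] →+* ℚ_[p] := PadicInt.Coe.ringHom with hφ
    set T : PowerSeries ℚ_[p] := ((Q.map φ : Polynomial ℚ_[p]) : PowerSeries ℚ_[p]) with hT
    have hTcoeff : ∀ m, coeff m T = if m < k then A m else 0 := by
      intro m
      rw [hT, Polynomial.coeff_coe, Polynomial.coeff_map, hQcoeff]
      by_cases h : m < k
      · rw [if_pos h, if_pos h]; exact hzcoe m h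
      · rw [if_neg h, if_neg h, map_zero]
    have hTpow : ∀ m, coeff m (T ^ p) = ((((Q ^ p).coeff m : ℤ_[p])) : ℚ_[p]) := by
      intro m
      rw [hT, ← Polynomial.coe_pow, ← Polynomial.map_pow, Polynomial.coeff_coe,
        Polynomial.coeff_map]
      rfl
    set T1 : PowerSeries ℚ_[p] := T + PowerSeries.C (A k) * (PowerSeries.X) ^ k with hT1
    have hagree : ∀ j, j ≤ k → coeff j Eh = coeff j T1 := by
      intro j hj
      rw [hEhc, hT1, map_add, hTcoeff, coeff_C_mul, coeff_X_pow]
      rcases eq_or_lt_of_le hj with rfl | hlt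
      · rw [if_neg (lt_irrefl j), if_pos rfl, mul_one, zero_add]
      · rw [if_pos hlt, if_neg (by omega), mul_zero, add_zero]
    have halpha : coeff k (Eh ^ p) = coeff k (T1 ^ p) := by
      obtain ⟨c, hc⟩ := sub_dvd_pow_sub_pow Eh T1 p
      have h0 : coeff k (Eh ^ p - T1 ^ p) = 0 := by
        rw [hc, coeff_mul]
        apply Finset.sum_eq_zero
        intro x hx
        have hx1 : x.1 ≤ k := by
          have := Finset.HasAntidiagonal.mem_antidiagonal.1 hx; omega
        rw [map_sub, hagree x.1 hx1, sub_self, zero_mul]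
      rw [map_sub] at h0
      exact sub_eq_zero.mp h0
    have hconstT : constantCoeff T = 1 := by
      rw [← coeff_zero_eq_constantCoeff, hTcoeff, if_pos hk, hA0]
    have hbeta : coeff k (T1 ^ p) = coeff k (T ^ p) + (p : ℚ_[p]) * A k := by
      have hcomm : T1 = (PowerSeries.C (A k) * (PowerSeries.X) ^ k) + T := by
        rw [hT1, add_comm]
      set c : ℚ_[p] := A k with hcdef
      set F : ℕ → ℚ_[p] := fun m => coeff k
        ((PowerSeries.C c * (PowerSeries.X : PowerSeries ℚ_[p]) ^ k) ^ m * T ^ (p - m)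
          * ((Nat.choose p m : ℕ) : PowerSeries ℚ_[p])) with hF
      have hsum : coeff k (T1 ^ p) = ∑ m ∈ range (p+1), F m := by
        rw [hcomm, add_pow, map_sum]
      have hF0 : F 0 = coeff k (T ^ p) := by
        rw [hF]
        simp
      have hF1 : F 1 = (p : ℚ_[p]) * A k := by
        have harr : (PowerSeries.C c * (PowerSeries.X : PowerSeries ℚ_[p]) ^ k) ^ 1
              * T ^ (p - 1) * ((Nat.choose p 1 : ℕ) : PowerSeries ℚ_[p])
            = PowerSeries.C c * ((PowerSeries.X : PowerSeries ℚ_[p]) ^ k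
              * (T ^ (p - 1) * ((Nat.choose p 1 : ℕ) : PowerSeries ℚ_[p]))) := by ring
        simp only [hF]
        rw [harr, coeff_C_mul]
        have hXk : coeff k ((PowerSeries.X : PowerSeries ℚ_[p]) ^ k
            * (T ^ (p - 1) * ((Nat.choose p 1 : ℕ) : PowerSeries ℚ_[p])))
            = coeff 0 (T ^ (p - 1) * ((Nat.choose p 1 : ℕ) : PowerSeries ℚ_[p])) := by
          have := coeff_X_pow_mul (T ^ (p - 1) * ((Nat.choose p 1 : ℕ) : PowerSeries ℚ_[p])) k 0
          rwa [zero_add] at this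
        rw [hXk, coeff_zero_eq_constantCoeff, map_mul, map_pow, hconstT, one_pow, one_mul,
          map_natCast, Nat.choose_one_right]
        ring
      have hFm : ∀ m, F (m + 2) = 0 := by
        intro m
        have harr : (PowerSeries.C c * (PowerSeries.X : PowerSeries ℚ_[p]) ^ k) ^ (m+2)
              * T ^ (p - (m+2)) * ((Nat.choose p (m+2) : ℕ) : PowerSeries ℚ_[p])
            = (PowerSeries.C c) ^ (m+2) * (((PowerSeries.X : PowerSeries ℚ_[p]) ^ k) ^ (m+2)
              * (T ^ (p - (m+2)) * ((Nat.choose p (m+2) : ℕ) : PowerSeries ℚ_[p]))) := by ring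
        simp only [hF]
        rw [harr, ← map_pow, ← pow_mul, coeff_C_mul, coeff_X_pow_mul', if_neg, mul_zero]
        have h2 : k * (m + 2) = k * m + k + k := by ring
        omega
      obtain ⟨q, hq⟩ : ∃ q, p = q + 1 := ⟨p - 1, by omega⟩
      rw [hsum, Finset.sum_range_succ']
      rw [show range p = range (q + 1) from by rw [hq], Finset.sum_range_succ']
      have hzero : ∑ i ∈ range q, F (i + 1 + 1) = 0 :=
        Finset.sum_eq_zero fun i _ => hFm i
      rw [hzero, zero_add, hF0, hF1]
      ring
    have hgamma : coeff k (Eh ^ p)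
        = (if p ∣ k then A (k / p) else 0)
          + ∑ x ∈ (Finset.HasAntidiagonal.antidiagonal k).erase (k, 0),
              ρ (bb a p x.1) * ρ (xx p x.2) := by
      rw [hid2, coeff_mul]
      have hmem : ((k, 0) : ℕ × ℕ) ∈ Finset.HasAntidiagonal.antidiagonal k :=
        Finset.HasAntidiagonal.mem_antidiagonal.2 (by omega)
      rw [← Finset.add_sum_erase _ _ hmem]
      congr 1
      · rw [coeff_map, coeff_map, coeff_mk, coeff_mk]
        have hxx0 : xx p 0 = 1 := by rw [xx]; simp
        rw [hxx0, map_one, mul_one, bb]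
        by_cases h : p ∣ k
        · rw [if_pos h, if_pos h]; rfl
        · rw [if_neg h, if_neg h, map_zero]
      · refine Finset.sum_congr rfl fun x hx => ?_
        rw [coeff_map, coeff_map, coeff_mk, coeff_mk]
    have hS : ‖∑ x ∈ (Finset.HasAntidiagonal.antidiagonal k).erase (k, 0),
        ρ (bb a p x.1) * ρ (xx p x.2)‖ ≤ (p:ℝ)⁻¹ := by
      have hppos : (0:ℝ) ≤ (p:ℝ)⁻¹ := by positivity
      refine norm_sum_le_of_forall_le_of_nonneg hppos fun x hx => ?_
      obtain ⟨hxne, hxmem⟩ := Finset.mem_erase.1 hx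
      have hxsum := Finset.HasAntidiagonal.mem_antidiagonal.1 hxmem
      have hx2 : 1 ≤ x.2 := by
        rcases Nat.eq_zero_or_pos x.2 with h | h
        · exact absurd (Prod.ext_iff.2 ⟨by omega, h⟩) hxne
        · exact h
      have hx1 : x.1 < k := by omega
      have hb : ‖ρ (bb a p x.1)‖ ≤ 1 := by
        rw [bb]
        by_cases h : p ∣ x.1
        · rw [if_pos h]
          exact hAnorm _ (lt_of_le_of_lt (Nat.div_le_self _ _) hx1)
        · rw [if_neg h, map_zero, norm_zero]
          exact zero_le_one
      have hxx : ‖ρ (xx p x.2)‖ ≤ (p:ℝ)⁻¹ := norm_xx_le x.2 hx2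
      calc ‖ρ (bb a p x.1) * ρ (xx p x.2)‖
          = ‖ρ (bb a p x.1)‖ * ‖ρ (xx p x.2)‖ := norm_mul _ _
        _ ≤ 1 * (p:ℝ)⁻¹ := mul_le_mul hb hxx (norm_nonneg _) zero_le_one
        _ = (p:ℝ)⁻¹ := one_mul _
    -- mod p congruence
    set u : ℤ_[p] := if p ∣ k then z (k / p) else 0 with hu
    have hucoe : ((u : ℚ_[p])) = (if p ∣ k then A (k / p) else 0) := by
      rw [hu]
      by_cases h : p ∣ k
      · rw [if_pos h, if_pos h, hzcoe _ (Nat.div_lt_self hk hp1)]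
      · rw [if_neg h, if_neg h]; rfl
    set w : ℤ_[p] := (Q ^ p).coeff k - u with hw
    have hwnorm : ‖((w : ℚ_[p]))‖ ≤ (p:ℝ)⁻¹ := by
      set ψ : ℤ_[p] →+* ZMod p := PadicInt.toZMod with hψ
      have hfrob : (Q.map ψ) ^ p = Polynomial.expand (ZMod p) p (Q.map ψ) := by
        have h1 := Polynomial.map_frobenius_expand p (Q.map ψ)
        rw [ZMod.frobenius_zmod, Polynomial.map_id] at h1
        exact h1.symm
      have hcong : ψ ((Q ^ p).coeff k) = ψ u := by
        have h2 : ((Q ^ p).map ψ).coeff k = ψ ((Q ^ p).coeff k) := Polynomial.coeff_map _ _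
        rw [← h2, Polynomial.map_pow, hfrob, Polynomial.coeff_expand hp.1.pos, hu]
        by_cases h : p ∣ k
        · rw [if_pos h, if_pos h, Polynomial.coeff_map, hQcoeff,
            if_pos (Nat.div_lt_self hk hp1)]
        · rw [if_neg h, if_neg h, map_zero]
      have hker : ψ w = 0 := by rw [hw, map_sub, hcong, sub_self]
      have hmem : w ∈ RingHom.ker ψ := hker
      rw [hψ, PadicInt.ker_toZMod, PadicInt.maximalIdeal_eq_span_p,
        Ideal.mem_span_singleton] at hmem
      obtain ⟨cc, hcc⟩ := hmem
      rw [hcc, PadicInt.coe_mul, norm_mul, PadicInt.coe_natCast, Padic.norm_p]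
      have hccle : ‖((cc : ℚ_[p]))‖ ≤ 1 := cc.property
      calc ((p:ℝ))⁻¹ * ‖((cc : ℚ_[p]))‖
          ≤ ((p:ℝ))⁻¹ * 1 := mul_le_mul_of_nonneg_left hccle (by positivity)
        _ = (p:ℝ)⁻¹ := mul_one _
    -- assembly
    have heq1 : coeff k (Eh ^ p)
        = (((Q ^ p).coeff k : ℤ_[p]) : ℚ_[p]) + (p : ℚ_[p]) * A k := by
      rw [halpha, hbeta, hTpow]
    have heq2 : (p : ℚ_[p]) * A k
        = -((w : ℚ_[p]))
          + ∑ x ∈ (Finset.HasAntidiagonal.antidiagonal k).erase (k, 0), ρ (bb a p x.1) * ρ (xx p x.2) := by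
      have h3 : ((w : ℚ_[p])) = (((Q ^ p).coeff k : ℤ_[p]) : ℚ_[p]) - ((u : ℚ_[p])) := by
        rw [hw, PadicInt.coe_sub]
      rw [h3, hucoe]
      linear_combination hgamma - heq1
    have hnorm2 : ‖(p : ℚ_[p]) * A k‖ ≤ (p:ℝ)⁻¹ := by
      rw [heq2]
      refine (norm_add_le_max _ _).trans (max_le ?_ hS)
      rwa [norm_neg]
    rw [norm_mul, Padic.norm_p] at hnorm2
    have hppos : (0:ℝ) < (p:ℝ)⁻¹ := by
      have : (0:ℝ) < (p:ℝ) := by exact_mod_cast hp.1.pos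
      positivity
    exact le_of_mul_le_mul_left (by rw [mul_one]; exact hnorm2) hppos

end AH

/-- The Artin–Hasse exponential `E_p(x) = exp(∑_{n≥0} x^{p^n}/p^n)`
has `p`-integral coefficients, i.e. `E_p(x) ∈ ℤ_p⟦x⟧`, and `E_p(x) ≡ 1 + x (mod x²)`.

Here `L` is the formal power series `∑_{n≥0} x^{p^n}/p^n` over `ℚ` (characterized
coefficientwise), and `E = exp(L)` is characterized as the unique power series with
constant term `1` satisfying `E' = L' · E`.  `p`-integrality of a rational number is
expressed as having `p`-adic norm at most `1`. -/
theorem stmt_8 (p : ℕ) [hp : Fact p.Prime]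
    (L E : PowerSeries ℚ)
    (hL1 : ∀ n : ℕ, coeff (p ^ n) L = 1 / (p ^ n : ℚ))
    (hL2 : ∀ k : ℕ, (¬ ∃ n : ℕ, k = p ^ n) → coeff k L = 0)
    (hE0 : constantCoeff E = 1)
    (hE : derivativeFun E = derivativeFun L * E) :
    (∀ k : ℕ, ‖((coeff k E : ℚ) : ℚ_[p])‖ ≤ 1) ∧
      coeff 0 E = 1 ∧ coeff 1 E = 1 := by
  have hD := AH.derivL_eq L hL1 hL2
  rw [hD] at hE
  have ha0 : coeff 0 E = 1 := by rw [coeff_zero_eq_constantCoeff]; exact hE0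
  have ha1 : coeff 1 E = 1 := by
    have h := AH.recursion E hE 1 le_rfl
    rw [Finset.sum_range_one, if_pos (by simp)] at h
    simpa [ha0] using h
  refine ⟨?_, ha0, ha1⟩
  have hmk : PowerSeries.mk (fun i => coeff i E) = E := by
    ext n
    rw [coeff_mk]
  have hid' : (PowerSeries.mk (fun i => coeff i E)) ^ p
      = PowerSeries.mk (AH.bb (fun i => coeff i E) p) * PowerSeries.mk (AH.xx p) := by
    rw [hmk]
    exact AH.stage2 E hE hE0
  exact AH.integral (fun i => coeff i E) ha0 hid'
end
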